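/- arXiv:0809.0194 — 5 statements merged into one kernel-verified Lean document; each statement's English description precedes it below -/
import Mathlib

section
/- If R is a commutative ring containing an element r such that both r and r-1 are invertible, then any R-quadratic map f: M → N between R-modules decomposes uniquely as a sum f = f₁ + f₂ where f₁ is R-linear and f₂ is homogeneous R-quadratic. -/
/-- The cross-effect of a map between abelian groups. -/
def crossEff {M N : Type*} [AddCommGroup M] [AddCommGroup N] (f : M → N) (x y : M) : N :=
  f (x + y) - f x - f y

/-- `f : M → N` is `R`-quadratic: its cross-effect is `R`-bilinear and its second
cross-actions `x ↦ f (r • x) - r ^ 2 • f x` are `R`-linear. -/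
def IsQuadratic (R : Type*) {M N : Type*} [CommRing R] [AddCommGroup M] [Module R M]
    [AddCommGroup N] [Module R N] (f : M → N) : Prop :=
  (∀ x y z : M, crossEff f (x + y) z = crossEff f x z + crossEff f y z) ∧
  (∀ (r : R) (x y : M), crossEff f (r • x) y = r • crossEff f x y) ∧
  (∀ x y z : M, crossEff f x (y + z) = crossEff f x y + crossEff f x z) ∧
  (∀ (r : R) (x y : M), crossEff f x (r • y) = r • crossEff f x y) ∧
  (∀ (r : R) (x y : M), f (r • (x + y)) - r ^ 2 • f (x + y)
      = (f (r • x) - r ^ 2 • f x) + (f (r • y) - r ^ 2 • f y)) ∧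
  (∀ (r s : R) (x : M), f (r • s • x) - r ^ 2 • f (s • x) = s • (f (r • x) - r ^ 2 • f x))

/-- A homogeneous `R`-quadratic map. -/
def IsHomogQuadratic (R : Type*) {M N : Type*} [CommRing R] [AddCommGroup M] [Module R M]
    [AddCommGroup N] [Module R N] (f : M → N) : Prop :=
  IsQuadratic R f ∧ ∀ (r : R) (x : M), f (r • x) = r ^ 2 • f x

/-! The second cross-actions `δₛ x = f (s • x) - s ^ 2 • f x` of a quadratic map are linear and
satisfy `(r - r ^ 2) • δₛ = (s - s ^ 2) • δᵣ`, which comes from expanding `f (r • s • x)` in two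
ways. When `r - r ^ 2 = -r (r - 1)` is a unit this forces `δₛ = (s - s ^ 2) • L` with
`L = (r - r ^ 2)⁻¹ • δᵣ`; then `f - L` is homogeneous, and `L` is the only possible linear part,
since any decomposition `f = L' + Q` with `Q` homogeneous has `δₛ = (s - s ^ 2) • L'`. -/

section

variable {R M N : Type*} [CommRing R] [AddCommGroup M] [Module R M] [AddCommGroup N] [Module R N]

theorem crossEff_sub (f g : M → N) (x y : M) :
    crossEff (f - g) x y = crossEff f x y - crossEff g x y := by
  simp only [crossEff, Pi.sub_apply]
  abel

theorem LinearMap.crossEff_eq_zero (L : M →ₗ[R] N) (x y : M) : crossEff L x y = 0 := by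
  simp [crossEff]

theorem LinearMap.isQuadratic (L : M →ₗ[R] N) : IsQuadratic R L := by
  refine ⟨?_, ?_, ?_, ?_, ?_, ?_⟩ <;> intros <;>
    simp only [LinearMap.crossEff_eq_zero, map_add, map_smul, smul_zero, add_zero] <;> module

namespace IsQuadratic

variable {f : M → N}

theorem sub {g : M → N} (hf : IsQuadratic R f) (hg : IsQuadratic R g) : IsQuadratic R (f - g) := by
  obtain ⟨hf₁, hf₂, hf₃, hf₄, hf₅, hf₆⟩ := hf
  obtain ⟨hg₁, hg₂, hg₃, hg₄, hg₅, hg₆⟩ := hg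
  refine ⟨fun x y z => ?_, fun s x y => ?_, fun x y z => ?_, fun s x y => ?_, fun s x y => ?_,
    fun s t x => ?_⟩
  all_goals simp only [crossEff_sub, Pi.sub_apply]
  · rw [hf₁, hg₁]; abel
  · rw [hf₂, hg₂, smul_sub]
  · rw [hf₃, hg₃]; abel
  · rw [hf₄, hg₄, smul_sub]
  · linear_combination (norm := module) hf₅ s x y - hg₅ s x y
  · linear_combination (norm := module) hf₆ s t x - hg₆ s t x

def crossAction (hf : IsQuadratic R f) (s : R) : M →ₗ[R] N where
  toFun x := f (s • x) - s ^ 2 • f x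
  map_add' := hf.2.2.2.2.1 s
  map_smul' := hf.2.2.2.2.2 s

@[simp]
theorem crossAction_apply (hf : IsQuadratic R f) (s : R) (x : M) :
    hf.crossAction s x = f (s • x) - s ^ 2 • f x :=
  rfl

theorem sub_sq_smul_crossAction_comm (hf : IsQuadratic R f) (r s : R) (x : M) :
    (r - r ^ 2) • hf.crossAction s x = (s - s ^ 2) • hf.crossAction r x := by
  have hrs := hf.2.2.2.2.2 r s x
  have hsr := hf.2.2.2.2.2 s r x
  rw [smul_comm s r x] at hsr
  simp only [crossAction_apply]
  linear_combination (norm := module) hrs - hsr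

noncomputable def linearPart (hf : IsQuadratic R f) {r : R} (hr : IsUnit (r - r ^ 2)) :
    M →ₗ[R] N :=
  (↑hr.unit⁻¹ : R) • hf.crossAction r

theorem crossAction_eq_smul_linearPart (hf : IsQuadratic R f) {r : R} (hr : IsUnit (r - r ^ 2))
    (s : R) (x : M) : hf.crossAction s x = (s - s ^ 2) • hf.linearPart hr x := by
  rw [linearPart, LinearMap.smul_apply, smul_comm, ← sub_sq_smul_crossAction_comm,
    smul_smul, hr.val_inv_mul, one_smul]

theorem map_smul_sub_linearPart (hf : IsQuadratic R f) {r : R} (hr : IsUnit (r - r ^ 2))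
    (s : R) (x : M) :
    (f - hf.linearPart hr) (s • x) = s ^ 2 • (f - hf.linearPart hr) x := by
  have hδ := hf.crossAction_eq_smul_linearPart hr s x
  rw [crossAction_apply] at hδ
  simp only [Pi.sub_apply, map_smul]
  linear_combination (norm := module) hδ

theorem crossAction_eq_smul_of_eq_add (hf : IsQuadratic R f) {L : M →ₗ[R] N} {Q : M → N}
    (hQ : ∀ (s : R) (x : M), Q (s • x) = s ^ 2 • Q x) (hfLQ : ∀ x, f x = L x + Q x)
    (s : R) (x : M) : hf.crossAction s x = (s - s ^ 2) • L x := by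
  rw [crossAction_apply, hfLQ, hfLQ, map_smul, hQ]
  module

theorem eq_linearPart_of_eq_add (hf : IsQuadratic R f) {r : R} (hr : IsUnit (r - r ^ 2))
    {L : M →ₗ[R] N} {Q : M → N} (hQ : ∀ (s : R) (x : M), Q (s • x) = s ^ 2 • Q x)
    (hfLQ : ∀ x, f x = L x + Q x) : L = hf.linearPart hr := by
  ext x
  rw [← hr.smul_left_cancel, ← hf.crossAction_eq_smul_of_eq_add hQ hfLQ,
    hf.crossAction_eq_smul_linearPart hr]

end IsQuadratic

end

/-- If `R` contains an element `r` with `r` and `r - 1` invertible, then every `R`-quadratic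
map decomposes uniquely as a sum of an `R`-linear map and a homogeneous `R`-quadratic map. -/
theorem quadratic_decomposition_of_unit {R M N : Type*} [CommRing R] [AddCommGroup M]
    [Module R M] [AddCommGroup N] [Module R N]
    (r : R) (hr : IsUnit r) (hr1 : IsUnit (r - 1))
    (f : M → N) (hf : IsQuadratic R f) :
    ∃! p : (M →ₗ[R] N) × (M → N),
      IsHomogQuadratic R p.2 ∧ ∀ x : M, f x = p.1 x + p.2 x := by
  have hu : IsUnit (r - r ^ 2) := by
    rw [show r - r ^ 2 = -(r * (r - 1)) by ring]
    exact (hr.mul hr1).neg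
  refine ⟨(hf.linearPart hu, f - hf.linearPart hu),
    ⟨⟨hf.sub (hf.linearPart hu).isQuadratic, hf.map_smul_sub_linearPart hu⟩, fun x => by simp⟩, ?_⟩
  rintro ⟨L', Q⟩ ⟨⟨-, hQ⟩, hfLQ⟩
  obtain rfl := hf.eq_linearPart_of_eq_add hu hQ hfLQ
  exact Prod.ext rfl (funext fun x => by simp [hfLQ])
end

section
/- For R-modules M, M', N, there is a natural isomorphism of R-modules between R-Quad(M ⊕ M', N) and R-Quad(M, N) ⊕ R-Quad(M', N) ⊕ Hom_R(M ⊗_R M', N), given by restricting to the summands and taking the mixed cross-effect h(x ⊗ x') = d_f((x,0),(0,x')). -/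
section Aux
variable {R M M' N M₀ : Type*} [CommRing R] [AddCommGroup M] [Module R M]
  [AddCommGroup M'] [Module R M'] [AddCommGroup N] [Module R N]
  [AddCommGroup M₀] [Module R M₀]

lemma quad_zero {f : M → N} (hf : IsQuadratic R f) : f 0 = 0 := by
  have h := hf.2.1 0 0 0
  simp [crossEff] at h
  exact h

lemma quad_comp {f : M → N} (hf : IsQuadratic R f) (φ : M₀ →ₗ[R] M) :
    IsQuadratic R (fun x => f (φ x)) := by
  obtain ⟨h1, h2, h3, h4, h5, h6⟩ := hf
  refine ⟨fun x y z => ?_, fun r x y => ?_, fun x y z => ?_, fun r x y => ?_,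
    fun r x y => ?_, fun r s x => ?_⟩
  · simpa [crossEff, map_add] using h1 (φ x) (φ y) (φ z)
  · simpa [crossEff, map_add, map_smul] using h2 r (φ x) (φ y)
  · simpa [crossEff, map_add] using h3 (φ x) (φ y) (φ z)
  · simpa [crossEff, map_add, map_smul] using h4 r (φ x) (φ y)
  · simpa [map_add, map_smul] using h5 r (φ x) (φ y)
  · simpa [map_smul] using h6 r s (φ x)

open TensorProduct

lemma quad_combine {g : M → N} {g' : M' → N} (hg : IsQuadratic R g) (hg' : IsQuadratic R g')
    (B : TensorProduct R M M' →ₗ[R] N) :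
    IsQuadratic R (fun v : M × M' => g v.1 + g' v.2 + B (v.1 ⊗ₜ[R] v.2)) := by
  obtain ⟨h1, h2, h3, h4, h5, h6⟩ := hg
  obtain ⟨h1', h2', h3', h4', h5', h6'⟩ := hg'
  have key : ∀ v w : M × M', crossEff (fun v : M × M' => g v.1 + g' v.2 + B (v.1 ⊗ₜ[R] v.2)) v w
      = crossEff g v.1 w.1 + crossEff g' v.2 w.2 + B (v.1 ⊗ₜ[R] w.2) + B (w.1 ⊗ₜ[R] v.2) := by
    intro v w
    simp only [crossEff, Prod.fst_add, Prod.snd_add, add_tmul, tmul_add, map_add]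
    abel
  have key2 : ∀ (r : R) (v : M × M'),
      (fun v : M × M' => g v.1 + g' v.2 + B (v.1 ⊗ₜ[R] v.2)) (r • v)
        - r ^ 2 • (fun v : M × M' => g v.1 + g' v.2 + B (v.1 ⊗ₜ[R] v.2)) v
      = (g (r • v.1) - r ^ 2 • g v.1) + (g' (r • v.2) - r ^ 2 • g' v.2) := by
    intro r v
    simp only [Prod.smul_fst, Prod.smul_snd, smul_tmul, tmul_smul, map_smul, smul_add,
      smul_smul, pow_two]
    abel
  refine ⟨fun x y z => ?_, fun r x y => ?_, fun x y z => ?_, fun r x y => ?_,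
    fun r x y => ?_, fun r s x => ?_⟩
  · rw [key, key, key]
    simp only [Prod.fst_add, Prod.snd_add, add_tmul, tmul_add, map_add, h1, h3, h1', h3']
    abel
  · rw [key, key]
    simp only [Prod.smul_fst, Prod.smul_snd, smul_tmul, tmul_smul, map_smul, h2, h2', smul_add]
  · rw [key, key, key]
    simp only [Prod.fst_add, Prod.snd_add, add_tmul, tmul_add, map_add, h1, h3, h1', h3']
    abel
  · rw [key, key]
    simp only [Prod.smul_fst, Prod.smul_snd, smul_tmul, tmul_smul, map_smul, h4, h4', smul_add]
  · rw [key2, key2, key2]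
    simp only [Prod.fst_add, Prod.snd_add]
    rw [h5 r x.1 y.1, h5' r x.2 y.2]
    abel
  · rw [key2, key2]
    simp only [Prod.smul_fst, Prod.smul_snd, smul_add]
    rw [h6 r s x.1, h6' r s x.2]

end Aux

def mixedBil {R M M' N : Type*} [CommRing R] [AddCommGroup M] [Module R M]
    [AddCommGroup M'] [Module R M'] [AddCommGroup N] [Module R N]
    {f : M × M' → N} (hf : IsQuadratic R f) : M →ₗ[R] M' →ₗ[R] N :=
  LinearMap.mk₂ R (fun x x' => crossEff f (x, 0) (0, x'))
    (fun x y x' => by simpa [Prod.mk_add_mk] using hf.1 (x, 0) (y, 0) (0, x'))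
    (fun r x x' => by simpa [Prod.smul_mk, smul_zero] using hf.2.1 r (x, 0) (0, x'))
    (fun x x' y' => by simpa [Prod.mk_add_mk] using hf.2.2.1 (x, 0) (0, x') (0, y'))
    (fun r x x' => by simpa [Prod.smul_mk, smul_zero] using hf.2.2.2.1 r (x, 0) (0, x'))


open TensorProduct in
/-- `R-Quad(M ⊕ M', N) ≅ R-Quad(M,N) ⊕ R-Quad(M',N) ⊕ Hom_R(M ⊗ M', N)`:
the bijection restricts quadratic maps to the two summands and takes the mixed
cross-effect, and it is compatible with the `R`-module operations. -/
theorem quad_prod_equiv {R M M' N : Type*} [CommRing R] [AddCommGroup M] [Module R M]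
    [AddCommGroup M'] [Module R M'] [AddCommGroup N] [Module R N] :
    ∃ e : {f : M × M' → N // IsQuadratic R f} ≃
        ({f : M → N // IsQuadratic R f} × {f : M' → N // IsQuadratic R f} ×
          (TensorProduct R M M' →ₗ[R] N)),
      (∀ (f : {f : M × M' → N // IsQuadratic R f}) (x : M), ((e f).1).1 x = f.1 (x, 0)) ∧
      (∀ (f : {f : M × M' → N // IsQuadratic R f}) (x' : M'),
          ((e f).2.1).1 x' = f.1 (0, x')) ∧
      (∀ (f : {f : M × M' → N // IsQuadratic R f}) (x : M) (x' : M'),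
          (e f).2.2 (x ⊗ₜ[R] x') = crossEff f.1 (x, 0) (0, x')) ∧
      (∀ f g s : {f : M × M' → N // IsQuadratic R f}, (∀ v, s.1 v = f.1 v + g.1 v) →
          (∀ x : M, ((e s).1).1 x = ((e f).1).1 x + ((e g).1).1 x) ∧
          (∀ x' : M', ((e s).2.1).1 x' = ((e f).2.1).1 x' + ((e g).2.1).1 x') ∧
          (e s).2.2 = (e f).2.2 + (e g).2.2) ∧
      (∀ (c : R) (f s : {f : M × M' → N // IsQuadratic R f}), (∀ v, s.1 v = c • f.1 v) →
          (∀ x : M, ((e s).1).1 x = c • ((e f).1).1 x) ∧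
          (∀ x' : M', ((e s).2.1).1 x' = c • ((e f).2.1).1 x') ∧
          (e s).2.2 = c • (e f).2.2) := by
  refine ⟨⟨fun f => (⟨fun x => f.1 (x, 0), quad_comp f.2 (LinearMap.inl R M M')⟩,
      ⟨fun x' => f.1 (0, x'), quad_comp f.2 (LinearMap.inr R M M')⟩,
      TensorProduct.lift (mixedBil f.2)),
    fun p => ⟨fun v => p.1.1 v.1 + p.2.1.1 v.2 + p.2.2 (v.1 ⊗ₜ[R] v.2),
      quad_combine p.1.2 p.2.1.2 p.2.2⟩, ?_, ?_⟩, ?_, ?_, ?_, ?_, ?_⟩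
  · intro f
    apply Subtype.ext
    funext v
    show f.1 (v.1, 0) + f.1 (0, v.2) + TensorProduct.lift (mixedBil f.2) (v.1 ⊗ₜ[R] v.2) = f.1 v
    rw [TensorProduct.lift.tmul]
    show f.1 (v.1, 0) + f.1 (0, v.2) + crossEff f.1 (v.1, 0) (0, v.2) = f.1 v
    simp only [crossEff, Prod.mk_add_mk, add_zero, zero_add]
    abel
  · intro p
    refine Prod.ext (Subtype.ext (funext fun x => ?_)) (Prod.ext (Subtype.ext (funext fun x' => ?_)) ?_)
    · show p.1.1 x + p.2.1.1 0 + p.2.2 (x ⊗ₜ[R] 0) = p.1.1 x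
      rw [quad_zero p.2.1.2, tmul_zero, map_zero, add_zero, add_zero]
    · show p.1.1 0 + p.2.1.1 x' + p.2.2 ((0 : M) ⊗ₜ[R] x') = p.2.1.1 x'
      rw [quad_zero p.1.2, zero_tmul, map_zero, add_zero, zero_add]
    · apply TensorProduct.ext'
      intro x x'
      rw [TensorProduct.lift.tmul]
      show crossEff (fun v : M × M' => p.1.1 v.1 + p.2.1.1 v.2 + p.2.2 (v.1 ⊗ₜ[R] v.2)) (x, 0) (0, x')
        = p.2.2 (x ⊗ₜ[R] x')
      simp only [crossEff, Prod.mk_add_mk, add_zero, zero_add, tmul_zero, zero_tmul, map_zero,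
        quad_zero p.1.2, quad_zero p.2.1.2]
      abel
  · intro f x; rfl
  · intro f x'; rfl
  · intro f x x'
    exact TensorProduct.lift.tmul x x'
  · intro f g s hs
    refine ⟨fun x => hs (x, 0), fun x' => hs (0, x'), ?_⟩
    apply TensorProduct.ext'
    intro x x'
    simp only [LinearMap.add_apply, TensorProduct.lift.tmul]
    show crossEff s.1 (x, 0) (0, x') = crossEff f.1 (x, 0) (0, x') + crossEff g.1 (x, 0) (0, x')
    simp only [crossEff, hs]
    abel
  · intro c f s hs
    refine ⟨fun x => hs (x, 0), fun x' => hs (0, x'), ?_⟩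
    apply TensorProduct.ext'
    intro x x'
    simp only [LinearMap.smul_apply, TensorProduct.lift.tmul]
    show crossEff s.1 (x, 0) (0, x') = c • crossEff f.1 (x, 0) (0, x')
    simp only [crossEff, hs, smul_sub]
end

section
/- Let I₂ be the ideal of a commutative ring R generated by the elements r² - r for r ∈ R. The map D: R → I₂ given by D(r) = r² - r is a universal quadratic derivation: for every R-module M and every quadratic derivation d: R → M, there exists a unique R-linear map φ: I₂ → M with d = φ ∘ D. -/
/-!
For a formal combination `l = ∑ bᵢ [rᵢ]` of generators put `x = ∑ bᵢ (rᵢ² - rᵢ) ∈ I₂` and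
`G = ∑ bᵢ d(rᵢ) ∈ M`. The derivation rules give `d(x) = x • G - G`, so `x = 0` forces
`G = 0` because `d 0 = 0`. Hence `r² - r ↦ d r` extends to a well-defined `R`-linear map
on `I₂`, unique since the `r² - r` span `I₂`.
-/

/-- A quadratic derivation on `R` with values in an `R`-module `M`. -/
def IsQuadDeriv (R : Type*) {M : Type*} [CommRing R] [AddCommGroup M] [Module R M]
    (d : R → M) : Prop :=
  (∀ r s : R, d (r + s) = d r + d s + (r * s) • d 2) ∧
  (∀ r s : R, d (r * s) = r • d s + s ^ 2 • d r)

/-- The ideal `I₂` of `R` generated by the elements `r² - r`. -/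
def polyIdeal2 (R : Type*) [CommRing R] : Ideal R :=
  Ideal.span {x : R | ∃ r : R, x = r ^ 2 - r}

open Finsupp

namespace IsQuadDeriv

variable {R M : Type*} [CommRing R] [AddCommGroup M] [Module R M] {d : R → M}

theorem map_zero (hd : IsQuadDeriv R d) : d 0 = 0 := by
  have h := hd.1 0 0
  simp only [add_zero, zero_mul, zero_smul] at h
  exact left_eq_add.mp h

theorem sq_sub_smul_comm (hd : IsQuadDeriv R d) (r s : R) :
    (r ^ 2 - r) • d s = (s ^ 2 - s) • d r := by
  have h := hd.2 s r
  rw [mul_comm] at h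
  linear_combination (norm := module) hd.2 r s - h

theorem two_smul_eq (hd : IsQuadDeriv R d) (r : R) :
    (2 : R) • d r = (r ^ 2 - r) • d 2 := by
  linear_combination (norm := module) -hd.sq_sub_smul_comm r 2

theorem map_sq_sub (hd : IsQuadDeriv R d) (r : R) :
    d (r ^ 2 - r) = (r ^ 2 - r) • d r - d r := by
  have hsq := hd.2 r r
  have hadd := hd.1 (r ^ 2 - r) r
  rw [← pow_two] at hsq
  rw [sub_add_cancel] at hadd
  linear_combination (norm := module) hsq - hadd + r • hd.two_smul_eq r

theorem sq_sub_smul_linearCombination (hd : IsQuadDeriv R d) (r : R) (l : R →₀ R) :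
    (r ^ 2 - r) • linearCombination R d l
      = linearCombination R (fun s => s ^ 2 - s) l • d r := by
  induction l using Finsupp.induction_linear with
  | zero => simp
  | add f g hf hg => simp only [map_add, smul_add, add_smul, hf, hg]
  | single s b =>
    simp only [linearCombination_single, smul_eq_mul]
    linear_combination (norm := module) b • hd.sq_sub_smul_comm r s

theorem linearCombination_smul_comm (hd : IsQuadDeriv R d) (l l' : R →₀ R) :
    linearCombination R (fun r => r ^ 2 - r) l • linearCombination R d l'
      = linearCombination R (fun r => r ^ 2 - r) l' • linearCombination R d l := by
  induction l using Finsupp.induction_linear with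
  | zero => simp
  | add f g hf hg => simp only [map_add, smul_add, add_smul, hf, hg]
  | single r b =>
    simp only [linearCombination_single, smul_eq_mul]
    linear_combination (norm := module) b • hd.sq_sub_smul_linearCombination r l'

theorem two_smul_linearCombination (hd : IsQuadDeriv R d) (l : R →₀ R) :
    (2 : R) • linearCombination R d l = linearCombination R (fun r => r ^ 2 - r) l • d 2 := by
  induction l using Finsupp.induction_linear with
  | zero => simp
  | add f g hf hg => simp only [map_add, smul_add, add_smul, hf, hg]
  | single r b =>
    simp only [linearCombination_single, smul_eq_mul]
    linear_combination (norm := module) b • hd.two_smul_eq r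

theorem map_linearCombination_sq_sub (hd : IsQuadDeriv R d) (l : R →₀ R) :
    d (linearCombination R (fun r => r ^ 2 - r) l)
      = linearCombination R (fun r => r ^ 2 - r) l • linearCombination R d l
        - linearCombination R d l := by
  induction l using Finsupp.induction_linear with
  | zero => simp [hd.map_zero]
  | add f g hf hg =>
    simp only [map_add, hd.1, hf, hg]
    -- the cross term `(x * y) • d 2` equals `x • G g + y • G f`, as `2 • G g = y • d 2`
    linear_combination (norm := module) -hd.linearCombination_smul_comm g f
      - linearCombination R (fun r => r ^ 2 - r) f • hd.two_smul_linearCombination g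
  | single r b =>
    simp only [linearCombination_single, smul_eq_mul]
    linear_combination (norm := module) hd.2 b (r ^ 2 - r) + b • hd.map_sq_sub r
      + (r ^ 2 - r) • hd.sq_sub_smul_comm r b

theorem linearCombination_eq_zero (hd : IsQuadDeriv R d) {l : R →₀ R}
    (hl : linearCombination R (fun r => r ^ 2 - r) l = 0) : linearCombination R d l = 0 := by
  have h := hd.map_linearCombination_sq_sub l
  rw [hl, hd.map_zero, zero_smul, zero_sub, eq_comm, neg_eq_zero] at h
  exact h

end IsQuadDeriv

theorem LinearMap.exists_comp_eq_of_surjective {R M N P : Type*} [Ring R] [AddCommGroup M]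
    [Module R M] [AddCommGroup N] [Module R N] [AddCommGroup P] [Module R P]
    {f : M →ₗ[R] N} (hf : Function.Surjective f) {g : M →ₗ[R] P} (hfg : ker f ≤ ker g) :
    ∃ h : N →ₗ[R] P, h ∘ₗ f = g :=
  ⟨(ker f).liftQ g hfg ∘ₗ (f.quotKerEquivOfSurjective hf).symm.toLinearMap, by ext; simp⟩

namespace polyIdeal2

variable {R : Type*} [CommRing R]

def gen (r : R) : polyIdeal2 R :=
  ⟨r ^ 2 - r, Ideal.subset_span ⟨r, rfl⟩⟩

variable (R) in
theorem span_range_gen : Submodule.span R (Set.range (gen (R := R))) = ⊤ := by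
  have h : Set.range (gen (R := R))
      = ((↑) : polyIdeal2 R → R) ⁻¹' {x | ∃ r : R, x = r ^ 2 - r} := by
    ext x
    simp [gen, Subtype.ext_iff, eq_comm]
  rw [h]
  exact Submodule.span_span_coe_preimage

theorem coe_linearCombination_gen (l : R →₀ R) :
    (linearCombination R gen l : R) = linearCombination R (fun r => r ^ 2 - r) l :=
  apply_linearCombination R (polyIdeal2 R).subtype gen l

end polyIdeal2

/-- `D : R → I₂`, `D(r) = r² - r`, is a universal quadratic derivation: every quadratic
derivation `d : R → M` factors uniquely as an `R`-linear map on `I₂` composed with `D`. -/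
theorem universal_quadDeriv {R M : Type*} [CommRing R] [AddCommGroup M] [Module R M]
    (d : R → M) (hd : IsQuadDeriv R d) :
    ∃! φ : polyIdeal2 R →ₗ[R] M,
      ∀ r : R, d r = φ ⟨r ^ 2 - r, Ideal.subset_span ⟨r, rfl⟩⟩ := by
  set π := linearCombination R (polyIdeal2.gen (R := R))
  have hπ : Function.Surjective π := by
    rw [← LinearMap.range_eq_top, range_linearCombination, polyIdeal2.span_range_gen]
  have hker : LinearMap.ker π ≤ LinearMap.ker (linearCombination R d) := fun l hl =>
    hd.linearCombination_eq_zero <| by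
      rw [← polyIdeal2.coe_linearCombination_gen, LinearMap.mem_ker.mp hl, ZeroMemClass.coe_zero]
  obtain ⟨φ, hφ⟩ := LinearMap.exists_comp_eq_of_surjective hπ hker
  have hφD : ∀ r, d r = φ (polyIdeal2.gen r) := fun r => by
    simpa [π] using (LinearMap.congr_fun hφ (single r 1)).symm
  exact ⟨φ, hφD, fun ψ hψ => LinearMap.ext_on_range (polyIdeal2.span_range_gen R)
    fun r => (hψ r).symm.trans (hφD r)⟩
end

section
/- If R is a 2-binomial commutative ring, then the ideal I₂ generated by {r² - r : r ∈ R} is equal to 2R, and the map R → I₂ sending r to 2r is an R-linear isomorphism. -/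
/-- If `R` is 2-binomial (every `r² - r` is uniquely 2-divisible, with half `h r`), then
`I₂ = 2R` and `r ↦ 2r` is an `R`-linear isomorphism `R ≃ I₂`. -/
theorem polyIdeal2_of_binomial {R : Type*} [CommRing R] (h : R → R)
    (hdiv : ∀ r : R, 2 * h r = r ^ 2 - r)
    (huniq : ∀ (r a : R), 2 * a = r ^ 2 - r → a = h r) :
    polyIdeal2 R = Ideal.span {(2 : R)} ∧
    ∃ e : R ≃ₗ[R] polyIdeal2 R, ∀ r : R, (e r : R) = 2 * r := by
  have h0 : h 0 = 0 := (huniq 0 0 (by ring)).symm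
  have hreg : ∀ a : R, 2 * a = 0 → a = 0 := fun a ha => by
    have := huniq 0 a (by simpa using ha)
    rw [this, h0]
  have hideal : polyIdeal2 R = Ideal.span {(2 : R)} := by
    apply le_antisymm
    · rw [polyIdeal2, Ideal.span_le]
      rintro x ⟨r, rfl⟩
      exact Ideal.mem_span_singleton.2 ⟨h r, (hdiv r).symm⟩
    · rw [Ideal.span_le]
      rintro x hx
      rw [Set.mem_singleton_iff] at hx
      subst hx
      exact Ideal.subset_span ⟨2, by ring⟩
  refine ⟨hideal, ?_⟩
  have hmem : ∀ r : R, 2 * r ∈ polyIdeal2 R := fun r => by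
    rw [hideal]
    exact Ideal.mem_span_singleton.2 ⟨r, rfl⟩
  let f : R →ₗ[R] polyIdeal2 R :=
    { toFun := fun r => ⟨2 * r, hmem r⟩
      map_add' := fun a b => by ext; simp [mul_add]
      map_smul' := fun c a => by ext; simp [smul_eq_mul]; ring }
  have hinj : Function.Injective f := by
    intro a b hab
    have : (2 : R) * (a - b) = 0 := by
      have h1 : 2 * a = 2 * b := congrArg Subtype.val hab
      rw [mul_sub, h1, sub_self]
    have := hreg _ this
    exact sub_eq_zero.mp this
  have hsurj : Function.Surjective f := by
    rintro ⟨y, hy⟩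
    rw [hideal, Ideal.mem_span_singleton] at hy
    obtain ⟨r, rfl⟩ := hy
    exact ⟨r, rfl⟩
  exact ⟨LinearEquiv.ofBijective f ⟨hinj, hsurj⟩, fun r => rfl⟩
end

section
/- Let R be a commutative ring in which every element r satisfies r² = r (i.e., the ideal I₂ generated by {r² - r} is zero). Then for any R-module M, the R-linear map M → Sym²_R(M) sending x to x·x (the square class of x in the symmetric square) is injective. -/
open TensorProduct

/-- The relations defining the symmetric square: `x ⊗ y - y ⊗ x`. -/
def sym2Rel (R M : Type*) [CommRing R] [AddCommGroup M] [Module R M] :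
    Submodule R (TensorProduct R M M) :=
  Submodule.span R {z : TensorProduct R M M | ∃ x y : M, z = x ⊗ₜ[R] y - y ⊗ₜ[R] x}

/-- The symmetric square `Sym²_R(M) = (M ⊗ M)/(x⊗y - y⊗x)`. -/
abbrev Sym2M (R M : Type*) [CommRing R] [AddCommGroup M] [Module R M] :=
  TensorProduct R M M ⧸ sym2Rel R M

/-!
If `x ≠ y`, put `z = x - y`. Since `R` is Boolean, every element of `𝔪 M` is fixed by some
`e ∈ 𝔪`, so choosing a maximal ideal `𝔪` containing the annihilator of `z` gives `z ∉ 𝔪 M`.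
A functional `f : M → R/𝔪` with `f z ≠ 0` then yields the symmetric form `f a * f b`, which
factors through `Sym²_R(M)`; as `R/𝔪` is again Boolean, `x·x = y·y` forces
`f x = f x * f x = f y * f y = f y`, a contradiction.
-/

section

variable {R M : Type*} [CommRing R] [AddCommGroup M] [Module R M]

theorem exists_mem_smul_eq_self_of_mem_ideal_smul_top (hR : ∀ r : R, r * r = r) {I : Ideal R}
    {z : M} (hz : z ∈ I • (⊤ : Submodule R M)) : ∃ e ∈ I, e • z = z := by
  refine Submodule.smul_induction_on hz (fun r hr n _ ↦ ⟨r, hr, by rw [smul_smul, hR r]⟩) ?_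
  rintro u v ⟨e, he, heu⟩ ⟨e', he', he'v⟩
  -- `e + e' - e * e'` is the join of the idempotents `e` and `e'`
  refine ⟨e + e' - e * e', I.sub_mem (I.add_mem he he') (I.mul_mem_right _ he), ?_⟩
  have hu : (e + e' - e * e') • u = u := by
    rw [sub_smul, add_smul, mul_comm, mul_smul, heu]; abel
  have hv : (e + e' - e * e') • v = v := by
    rw [sub_smul, add_smul, mul_smul, he'v]; abel
  rw [smul_add, hu, hv]

theorem exists_isMaximal_notMem_smul_top (hR : ∀ r : R, r * r = r) {z : M} (hz : z ≠ 0) :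
    ∃ 𝔪 : Ideal R, 𝔪.IsMaximal ∧ z ∉ 𝔪 • (⊤ : Submodule R M) := by
  have hann : (R ∙ z).annihilator ≠ ⊤ := fun h ↦ hz <| by
    simpa using (Submodule.mem_annihilator_span_singleton z 1).mp (h ▸ Submodule.mem_top :)
  obtain ⟨𝔪, h𝔪, hle⟩ := Ideal.exists_le_maximal _ hann
  refine ⟨𝔪, h𝔪, fun hmem ↦ h𝔪.ne_top ?_⟩
  obtain ⟨e, he, hez⟩ := exists_mem_smul_eq_self_of_mem_ideal_smul_top hR hmem
  have h1e : 1 - e ∈ 𝔪 := hle <| (Submodule.mem_annihilator_span_singleton z _).mpr <| by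
    rw [sub_smul, one_smul, hez, sub_self]
  exact (Ideal.eq_top_iff_one _).mpr (by simpa using 𝔪.add_mem h1e he)

theorem exists_linearMap_quotient_ne_zero {𝔪 : Ideal R} [𝔪.IsMaximal] {z : M}
    (hz : z ∉ 𝔪 • (⊤ : Submodule R M)) : ∃ f : M →ₗ[R] R ⧸ 𝔪, f z ≠ 0 := by
  let _ : Field (R ⧸ 𝔪) := Ideal.Quotient.field 𝔪
  have : IsScalarTower R (R ⧸ 𝔪) (M ⧸ 𝔪 • (⊤ : Submodule R M)) :=
    Module.IsTorsionBySet.isScalarTower (Module.isTorsionBySet_quotient_ideal_smul M 𝔪)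
  obtain ⟨g, hg⟩ := Module.Projective.exists_dual_ne_zero (R ⧸ 𝔪)
    (mt (Submodule.Quotient.mk_eq_zero _).mp hz)
  exact ⟨g.restrictScalars R ∘ₗ (𝔪 • ⊤ : Submodule R M).mkQ, hg⟩

variable {A : Type*} [CommRing A] [Algebra R A]

theorem sym2Rel_le_ker_lift_mul (f : M →ₗ[R] A) :
    sym2Rel R M ≤ LinearMap.ker (TensorProduct.lift ((LinearMap.mul R A).compl₁₂ f f)) := by
  rw [sym2Rel, Submodule.span_le]
  rintro _ ⟨a, b, rfl⟩
  simp [mul_comm]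

theorem mul_self_eq_of_sym2_mk_tmul_self_eq (f : M →ₗ[R] A) {x y : M}
    (h : (Submodule.Quotient.mk (x ⊗ₜ[R] x) : Sym2M R M) = Submodule.Quotient.mk (y ⊗ₜ[R] y)) :
    f x * f x = f y * f y := by
  have := sym2Rel_le_ker_lift_mul f ((Submodule.Quotient.eq _).mp h)
  simpa [sub_eq_zero] using this

end

/-- If every element of `R` is idempotent (`I₂ = 0`), then the map
`M → Sym²_R(M)`, `x ↦ x·x`, is injective. -/
theorem sq_injective_of_idem {R M : Type*} [CommRing R] [AddCommGroup M] [Module R M]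
    (hR : ∀ r : R, r * r = r) :
    Function.Injective
      (fun x : M => (Submodule.Quotient.mk (x ⊗ₜ[R] x) : Sym2M R M)) := by
  intro x y hxy
  by_contra hne
  obtain ⟨𝔪, _, hz⟩ := exists_isMaximal_notMem_smul_top hR (sub_ne_zero.mpr hne)
  obtain ⟨f, hf⟩ := exists_linearMap_quotient_ne_zero hz
  have hk : ∀ t : R ⧸ 𝔪, t * t = t := by
    rintro ⟨r⟩
    exact congrArg (Ideal.Quotient.mk 𝔪) (hR r)
  have hfxy := mul_self_eq_of_sym2_mk_tmul_self_eq f hxy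
  rw [hk, hk] at hfxy
  exact hf (by rw [map_sub, hfxy, sub_self])
end
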